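/- Let b < 0 and L ≥ 1, h_L(r) = (√(-b)/L)e^{-2√(-b)r}, and let W_L be the associated warping function and q_{W_L} its isoperimetric quotient. Then C_L := inf_{t>0}(cosh(√(-b)t) − q_{W_L}(t)·√(-b)·sinh(√(-b)t)) satisfies 1 − 2/(3L) ≤ C_L ≤ 1; in particular C_L ≥ 1/3 > 0 and C_L → 1 as L → ∞. -/

import Mathlib

/-!
Write `a = √(-b)` and `E = 2∫₀ h_L`, so `E(s) = (1 - e^{-2as})/L`. Then
`q_{W_L}(t)·a·sinh(at) = ∫₀ᵗ a sinh(as) e^{E(t)-E(s)} ds`, and integrating by parts against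
`cosh(as) - 1` shows that the quantity inside the infimum equals `1 - R(t)` with
`R(t) = ∫₀ᵗ (cosh(as) - 1) E'(s) e^{E(t)-E(s)} ds ≥ 0`. In the variable `x = e^{-as}` the integrand
of `R` is `(a/L)·x(1-x)²·e^{E(t)-E(s)} ≤ (a/L)·x(1-x)²·eˣ`, so
`R(t) ≤ (1/L)∫₀¹ (1-x)² eˣ dx = (2e - 5)/L < 2/(3L)`.
-/

/-- The bounding function `h_L(r) = (√(-b)/L)·e^{-2√(-b)r}` of Remark 3.5. -/
noncomputable def hL (b L r : ℝ) : ℝ := Real.sqrt (-b) / L * Real.exp (-2 * Real.sqrt (-b) * r)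

/-- The warping function `W_L` of the isoperimetric comparison space associated to `h_L`. -/
noncomputable def WL (b L t : ℝ) : ℝ :=
  Real.sinh (Real.sqrt (-b) * t) /
    (Real.sqrt (-b) * Real.exp (2 * ∫ s in (0:ℝ)..t, hL b L s))

/-- The isoperimetric quotient `q_{W_L}`. -/
noncomputable def qWL (b L t : ℝ) : ℝ := (∫ s in (0:ℝ)..t, WL b L s) / WL b L t

/-- The constant `C_L = inf_{t>0} (cosh(√(-b)t) - q_{W_L}(t)·√(-b)·sinh(√(-b)t))`. -/
noncomputable def CL (b L : ℝ) : ℝ :=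
  sInf ((fun t => Real.cosh (Real.sqrt (-b) * t) -
    qWL b L t * Real.sqrt (-b) * Real.sinh (Real.sqrt (-b) * t)) '' Set.Ioi 0)

open Real Set Filter intervalIntegral

noncomputable def warpExponent (a L s : ℝ) : ℝ := (1 - exp (-2 * a * s)) / L

lemma hasDerivAt_warpExponent (a L s : ℝ) :
    HasDerivAt (warpExponent a L) (2 * a / L * exp (-2 * a * s)) s := by
  have h := ((((hasDerivAt_id s).const_mul (-2 * a)).exp.const_sub 1).div_const L)
  simp only [id, mul_one] at h
  exact h.congr_deriv (by ring)

lemma two_mul_integral_hL (b L t : ℝ) :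
    2 * ∫ s in (0:ℝ)..t, hL b L s = warpExponent (√(-b)) L t := by
  have hderiv : ∀ s, hL b L s = (2 * √(-b) / L * exp (-2 * √(-b) * s)) / 2 := by
    intro s; simp only [hL]; ring
  simp_rw [hderiv, intervalIntegral.integral_div]
  rw [integral_eq_sub_of_hasDerivAt (fun s _ => hasDerivAt_warpExponent _ L s)
    (by apply Continuous.intervalIntegrable; fun_prop)]
  simp only [warpExponent, mul_zero, exp_zero, sub_self, zero_div, sub_zero]
  ring

lemma WL_eq (b L t : ℝ) :
    WL b L t = sinh (√(-b) * t) * exp (-warpExponent (√(-b)) L t) / √(-b) := by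
  rw [WL, two_mul_integral_hL, exp_neg]
  field_simp

lemma integral_sinh_mul_exp_sub_eq {E E' : ℝ → ℝ} (hE : ∀ s, HasDerivAt E (E' s) s)
    (hE' : Continuous E') (a t : ℝ) :
    ∫ s in (0:ℝ)..t, a * sinh (a * s) * exp (E t - E s) =
      cosh (a * t) - 1 + ∫ s in (0:ℝ)..t, (cosh (a * s) - 1) * E' s * exp (E t - E s) := by
  have hcosh : ∀ s, HasDerivAt (fun s => cosh (a * s) - 1) (a * sinh (a * s)) s := fun s =>
    ((((hasDerivAt_id s).const_mul a).cosh).sub_const 1).congr_deriv (by simp only [id]; ring)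
  have hexp : ∀ s, HasDerivAt (fun s => exp (E t - E s)) (-E' s * exp (E t - E s)) s :=
    fun s => ((hE s).const_sub (E t)).exp.congr_deriv (by ring)
  have hE_cont : Continuous E := continuous_iff_continuousAt.2 fun s => (hE s).continuousAt
  have hparts := integral_mul_deriv_eq_deriv_mul (a := 0) (b := t) (fun s _ => hcosh s)
    (fun s _ => hexp s) (by apply Continuous.intervalIntegrable; fun_prop)
    (by apply Continuous.intervalIntegrable; fun_prop)
  have hneg : ∫ s in (0:ℝ)..t, (cosh (a * s) - 1) * (-E' s * exp (E t - E s)) =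
      -∫ s in (0:ℝ)..t, (cosh (a * s) - 1) * E' s * exp (E t - E s) := by
    rw [← intervalIntegral.integral_neg]; congr 1; ext s; ring
  simp only [mul_zero, cosh_zero, sub_self, zero_mul, sub_zero, exp_zero, mul_one, hneg] at hparts
  linarith

lemma cosh_sub_one_mul_two_mul_exp_neg_two_mul (x : ℝ) :
    (cosh x - 1) * (2 * exp (-2 * x)) = exp (-x) * (1 - exp (-x)) ^ 2 := by
  have hsq : exp (-2 * x) = exp (-x) ^ 2 := by rw [← exp_nat_mul]; ring_nf
  have hinv : exp x * exp (-x) = 1 := by rw [← exp_add, add_neg_cancel, exp_zero]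
  rw [cosh_eq, hsq]
  linear_combination exp (-x) * hinv

lemma five_le_sq_sub_four_mul_add_five_mul_exp {x : ℝ} (h0 : 0 ≤ x) (h1 : x ≤ 1) :
    5 ≤ (x ^ 2 - 4 * x + 5) * exp x := by
  have hexp := quadratic_le_exp_of_nonneg h0
  have hpoly : 0 ≤ x ^ 2 - 4 * x + 5 := by nlinarith
  have hprod : 0 ≤ x * (1 - x ^ 2) * (1 - x / 2) := by
    apply mul_nonneg (mul_nonneg h0 _) <;> nlinarith
  nlinarith [mul_le_mul_of_nonneg_left hexp hpoly]

lemma integral_mul_exp_neg_mul_one_sub_sq_mul_exp_le {a t : ℝ} (ha : 0 ≤ a) (ht : 0 ≤ t) :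
    ∫ s in (0:ℝ)..t, a * exp (-(a * s)) * (1 - exp (-(a * s))) ^ 2 * exp (exp (-(a * s))) ≤
      2 * exp 1 - 5 := by
  -- `x ↦ (x² - 4x + 5) eˣ` is a primitive of `(1 - x)² eˣ`; substitute `x = e^{-as}`.
  have hderiv : ∀ s, HasDerivAt
      (fun s => -((exp (-(a * s)) ^ 2 - 4 * exp (-(a * s)) + 5) * exp (exp (-(a * s)))))
      (a * exp (-(a * s)) * (1 - exp (-(a * s))) ^ 2 * exp (exp (-(a * s)))) s := by
    intro s
    have hX : HasDerivAt (fun s => exp (-(a * s))) (exp (-(a * s)) * -a) s :=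
      (((hasDerivAt_id s).const_mul a).neg.exp).congr_deriv (by simp)
    have hpoly : HasDerivAt (fun s => exp (-(a * s)) ^ 2 - 4 * exp (-(a * s)) + 5)
        (2 * exp (-(a * s)) * (exp (-(a * s)) * -a) - 4 * (exp (-(a * s)) * -a)) s :=
      (((hX.pow 2).sub (hX.const_mul 4)).add_const 5).congr_deriv (by ring)
    exact ((hpoly.mul hX.exp).neg).congr_deriv (by ring)
  rw [integral_eq_sub_of_hasDerivAt (fun s _ => hderiv s)
    (by apply Continuous.intervalIntegrable; fun_prop)]
  have hX0 : 0 ≤ exp (-(a * t)) := (exp_pos _).le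
  have hX1 : exp (-(a * t)) ≤ 1 := exp_le_one_iff.2 (by nlinarith)
  have := five_le_sq_sub_four_mul_add_five_mul_exp hX0 hX1
  simp only [mul_zero, neg_zero, exp_zero]
  linarith

lemma integral_cosh_sub_one_mul_deriv_warpExponent_nonneg {a L t : ℝ} (ha : 0 ≤ a)
    (hL : 0 ≤ L) (ht : 0 ≤ t) :
    0 ≤ ∫ s in (0:ℝ)..t, (cosh (a * s) - 1) * (2 * a / L * exp (-2 * a * s)) *
      exp (warpExponent a L t - warpExponent a L s) :=
  integral_nonneg ht fun s _ =>
    mul_nonneg (mul_nonneg (sub_nonneg.2 (one_le_cosh _)) (by positivity)) (exp_pos _).le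

lemma integral_cosh_sub_one_mul_deriv_warpExponent_le {a L t : ℝ} (ha : 0 ≤ a)
    (hL : 1 ≤ L) (ht : 0 ≤ t) :
    ∫ s in (0:ℝ)..t, (cosh (a * s) - 1) * (2 * a / L * exp (-2 * a * s)) *
      exp (warpExponent a L t - warpExponent a L s) ≤ (2 * exp 1 - 5) / L := by
  have hL0 : 0 < L := by linarith
  have hpointwise : ∀ s ∈ Icc (0:ℝ) t,
      (cosh (a * s) - 1) * (2 * a / L * exp (-2 * a * s)) *
        exp (warpExponent a L t - warpExponent a L s) ≤
      a * exp (-(a * s)) * (1 - exp (-(a * s))) ^ 2 * exp (exp (-(a * s))) / L := by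
    intro s hs
    have hsq : exp (-2 * a * s) = exp (-(a * s)) ^ 2 := by rw [← exp_nat_mul]; ring_nf
    have hX1 : exp (-(a * s)) ≤ 1 := exp_le_one_iff.2 (by nlinarith [hs.1])
    have hexponent : warpExponent a L t - warpExponent a L s ≤ exp (-(a * s)) := by
      have hdiff : warpExponent a L t - warpExponent a L s =
          (exp (-2 * a * s) - exp (-2 * a * t)) / L := by simp only [warpExponent]; ring
      rw [hdiff, div_le_iff₀ hL0, hsq]
      nlinarith [exp_pos (-2 * a * t), exp_pos (-(a * s))]
    have hfactor : (cosh (a * s) - 1) * (2 * a / L * exp (-2 * a * s)) =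
        a * exp (-(a * s)) * (1 - exp (-(a * s))) ^ 2 / L := by
      have h := cosh_sub_one_mul_two_mul_exp_neg_two_mul (a * s)
      rw [show -2 * (a * s) = -2 * a * s by ring] at h
      rw [show (cosh (a * s) - 1) * (2 * a / L * exp (-2 * a * s)) =
        a / L * ((cosh (a * s) - 1) * (2 * exp (-2 * a * s))) by ring, h]
      ring
    rw [hfactor, div_mul_eq_mul_div]
    gcongr
  calc _ ≤ ∫ s in (0:ℝ)..t,
        a * exp (-(a * s)) * (1 - exp (-(a * s))) ^ 2 * exp (exp (-(a * s))) / L :=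
        integral_mono_on ht (by apply Continuous.intervalIntegrable; unfold warpExponent; fun_prop)
          (by apply Continuous.intervalIntegrable; fun_prop) hpointwise
    _ ≤ (2 * exp 1 - 5) / L := by
        rw [intervalIntegral.integral_div]
        gcongr
        exact integral_mul_exp_neg_mul_one_sub_sq_mul_exp_le ha ht

lemma qWL_mul_mul_sinh_eq {b : ℝ} (hb : b < 0) (L : ℝ) {t : ℝ} (ht : t ≠ 0) :
    qWL b L t * √(-b) * sinh (√(-b) * t) =
      ∫ s in (0:ℝ)..t, √(-b) * sinh (√(-b) * s) *
        exp (warpExponent (√(-b)) L t - warpExponent (√(-b)) L s) := by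
  have ha : √(-b) ≠ 0 := (sqrt_pos.2 (neg_pos.2 hb)).ne'
  have hsinh : sinh (√(-b) * t) ≠ 0 := sinh_ne_zero.2 (mul_ne_zero ha ht)
  have hintegrand : ∀ s, √(-b) * sinh (√(-b) * s) *
      exp (warpExponent (√(-b)) L t - warpExponent (√(-b)) L s) =
      √(-b) ^ 2 * exp (warpExponent (√(-b)) L t) * WL b L s := by
    intro s
    rw [WL_eq, exp_sub, exp_neg]
    field_simp
  simp_rw [hintegrand, intervalIntegral.integral_const_mul, qWL, WL_eq b L t, exp_neg]
  field_simp

lemma cosh_sub_qWL_mul_sinh_mem_Icc {b L t : ℝ} (hb : b < 0) (hL : 1 ≤ L) (ht : 0 < t) :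
    cosh (√(-b) * t) - qWL b L t * √(-b) * sinh (√(-b) * t) ∈ Icc (1 - 2 / (3 * L)) 1 := by
  have ha : 0 ≤ √(-b) := sqrt_nonneg _
  rw [qWL_mul_mul_sinh_eq hb L ht.ne', integral_sinh_mul_exp_sub_eq
    (hasDerivAt_warpExponent _ L) (by fun_prop)]
  have hlow := integral_cosh_sub_one_mul_deriv_warpExponent_nonneg (L := L) ha (by linarith) ht.le
  have hup := integral_cosh_sub_one_mul_deriv_warpExponent_le ha hL ht.le
  have hconst : (2 * exp 1 - 5) / L ≤ 2 / (3 * L) := by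
    rw [← div_div]
    gcongr
    linarith [exp_one_lt_d9]
  constructor <;> linarith

lemma CL_mem_Icc {b L : ℝ} (hb : b < 0) (hL : 1 ≤ L) : CL b L ∈ Icc (1 - 2 / (3 * L)) 1 := by
  have hlower : ∀ y ∈ (fun t => cosh (√(-b) * t) - qWL b L t * √(-b) * sinh (√(-b) * t)) ''
      Ioi 0, 1 - 2 / (3 * L) ≤ y :=
    forall_mem_image.2 fun t ht => (cosh_sub_qWL_mul_sinh_mem_Icc hb hL ht).1
  exact ⟨le_csInf (nonempty_Ioi.image _) hlower, csInf_le_of_le ⟨_, hlower⟩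
    (mem_image_of_mem _ (mem_Ioi.2 one_pos)) (cosh_sub_qWL_mul_sinh_mem_Icc hb hL one_pos).2⟩

theorem stmt_18 (b : ℝ) (hb : b < 0) :
    (∀ L ≥ (1:ℝ), 1 - 2 / (3 * L) ≤ CL b L ∧ CL b L ≤ 1 ∧ (1:ℝ) / 3 ≤ CL b L) ∧
    Filter.Tendsto (fun L => CL b L) Filter.atTop (nhds 1) := by
  refine ⟨fun L hL => ⟨(CL_mem_Icc hb hL).1, (CL_mem_Icc hb hL).2, ?_⟩, ?_⟩
  · have : 2 / (3 * L) ≤ 2 / 3 := by gcongr; linarith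
    linarith [(CL_mem_Icc hb hL).1]
  · have hlower : Tendsto (fun L : ℝ => 1 - 2 / (3 * L)) atTop (nhds 1) := by
      simpa using tendsto_const_nhds.sub
        (tendsto_const_nhds.div_atTop (tendsto_id.const_mul_atTop (by norm_num : (0:ℝ) < 3)))
    refine tendsto_of_tendsto_of_tendsto_of_le_of_le' hlower tendsto_const_nhds ?_ ?_ <;>
      filter_upwards [eventually_ge_atTop 1] with L hL
    exacts [(CL_mem_Icc hb hL).1, (CL_mem_Icc hb hL).2]
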